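/- For every real v ≥ 1318.4 one has G(v,√3) > 1, where G(v,√3) := v·∫_1^{√(v/(v−2))} ((v+3)/(v+3x²))^{(v+1)/2} dx. -/

import Mathlib

/-! Bernoulli's inequality `(1 + s) ^ p ≥ 1 + p s` with `p = (v + 1) / 2` bounds the integrand
below on `[1, b]` by the quadratic `1 - c (x² - 1)`, `c = 3(v + 1) / (2(v + 3))`. Since
`b = √(v / (v - 2))` means `v = 2b² / (b² - 1)`, `v` times the integral of this minorant equals
`1 + (b - 1)² q(b) / ((b + 1)(5b² - 3))` with `q(b) = 3 + 9b + 2b² - 9b³ - 3b⁴`, and `q > 0` on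
`[1, 1.05]`. -/

open MeasureTheory Real intervalIntegral

lemma one_sub_mul_sq_sub_one_le_rpow_div {v a x : ℝ} (hv : 1 ≤ v) (ha : 0 ≤ a)
    (hx : 1 ≤ x ^ 2) :
    1 - a * (v + 1) / (2 * (v + a)) * (x ^ 2 - 1) ≤
      ((v + a) / (v + a * x ^ 2)) ^ ((v + 1) / 2) := by
  have hden : 0 < v + a * x ^ 2 := by positivity
  have hs : -1 ≤ a * (1 - x ^ 2) / (v + a * x ^ 2) := by
    rw [le_div_iff₀ hden]; linarith
  have hbase : (v + a) / (v + a * x ^ 2) = 1 + a * (1 - x ^ 2) / (v + a * x ^ 2) := by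
    field_simp; ring
  calc 1 - a * (v + 1) / (2 * (v + a)) * (x ^ 2 - 1)
      = 1 - (v + 1) / 2 * (a * (x ^ 2 - 1) / (v + a)) := by field_simp
    _ ≤ 1 - (v + 1) / 2 * (a * (x ^ 2 - 1) / (v + a * x ^ 2)) := by
      gcongr
      exact le_mul_of_one_le_right ha hx
    _ = 1 + (v + 1) / 2 * (a * (1 - x ^ 2) / (v + a * x ^ 2)) := by ring
    _ ≤ _ := hbase ▸ one_add_mul_self_le_rpow_one_add hs (by linarith)

lemma integral_one_sub_mul_sq_sub_one (c b : ℝ) :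
    ∫ x in (1 : ℝ)..b, (1 - c * (x ^ 2 - 1)) = (b - 1) - c * ((b - 1) ^ 2 * (b + 2) / 3) := by
  rw [intervalIntegral.integral_sub intervalIntegrable_const
      (Continuous.intervalIntegrable (by fun_prop) _ _), intervalIntegral.integral_const_mul,
    intervalIntegral.integral_sub (Continuous.intervalIntegrable (by fun_prop) _ _)
      intervalIntegrable_const]
  simp only [intervalIntegral.integral_const, integral_pow, smul_eq_mul]
  ring

lemma sub_le_integral_rpow_div {v a b : ℝ} (hv : 1 ≤ v) (ha : 0 ≤ a) (hb : 1 ≤ b) :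
    (b - 1) - a * (v + 1) / (2 * (v + a)) * ((b - 1) ^ 2 * (b + 2) / 3) ≤
      ∫ x in (1 : ℝ)..b, ((v + a) / (v + a * x ^ 2)) ^ ((v + 1) / 2) := by
  have hcont : Continuous fun x : ℝ => ((v + a) / (v + a * x ^ 2)) ^ ((v + 1) / 2) :=
    (continuous_const.div (by fun_prop) fun x => by positivity).rpow_const
      fun _ => Or.inr (by linarith)
  rw [← integral_one_sub_mul_sq_sub_one]
  refine integral_mono_on hb (Continuous.intervalIntegrable (by fun_prop) _ _)
    (hcont.intervalIntegrable _ _) fun x hx => ?_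
  exact one_sub_mul_sq_sub_one_le_rpow_div hv ha (one_le_pow₀ hx.1)

lemma one_lt_mul_sub_of_mul_sq_sub_one_eq {v b : ℝ} (hb1 : 1 < b) (hb : b ≤ 1.05)
    (hvb : v * (b ^ 2 - 1) = 2 * b ^ 2) :
    1 < v * ((b - 1) - 3 * (v + 1) / (2 * (v + 3)) * ((b - 1) ^ 2 * (b + 2) / 3)) := by
  have hb2 : 0 < b ^ 2 - 1 := by nlinarith
  obtain rfl : v = 2 * b ^ 2 / (b ^ 2 - 1) := by field_simp; linarith
  have ht : 0 < b - 1 := by linarith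
  have hq : 0 < -3 * b ^ 4 - 9 * b ^ 3 + 2 * b ^ 2 + 9 * b + 3 := by
    nlinarith [mul_pos ht ht, mul_nonneg ht.le (sub_nonneg.2 hb), pow_pos ht 3, pow_pos ht 4]
  have hpos : 0 < (b - 1) ^ 3 * (-3 * b ^ 4 - 9 * b ^ 3 + 2 * b ^ 2 + 9 * b + 3) := by
    positivity
  field_simp
  linear_combination hpos

theorem stmt_15 (v : ℝ) (hv : (1318.4 : ℝ) ≤ v) :
    1 < v * ∫ x in (1 : ℝ)..Real.sqrt (v / (v - 2)),
      ((v + 3) / (v + 3 * x ^ 2)) ^ ((v + 1) / 2) := by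
  have hv2 : 0 < v - 2 := by linarith
  set b := √(v / (v - 2))
  have hbb : b ^ 2 = v / (v - 2) := sq_sqrt (by positivity)
  have hb1 : 1 < b := (Real.lt_sqrt zero_le_one).2 (by rw [one_pow, one_lt_div hv2]; linarith)
  have hb : b ≤ 1.05 := Real.sqrt_le_iff.2 ⟨by norm_num, by rw [div_le_iff₀ hv2]; linarith⟩
  have hvb : v * (b ^ 2 - 1) = 2 * b ^ 2 := by rw [hbb]; field_simp; ring
  calc 1 < v * ((b - 1) - 3 * (v + 1) / (2 * (v + 3)) * ((b - 1) ^ 2 * (b + 2) / 3)) :=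
        one_lt_mul_sub_of_mul_sq_sub_one_eq hb1 hb hvb
    _ ≤ _ := mul_le_mul_of_nonneg_left
        (sub_le_integral_rpow_div (by linarith) (by norm_num) hb1.le) (by linarith)
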